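/- For all natural numbers n and m, the sum (as sets of trees) of the set of all planar binary trees with n internal vertices and the set of all planar binary trees with m internal vertices equals the set of all planar binary trees with n + m internal vertices; i.e., ∪_{s ∈ PBT_{n+1}, t ∈ PBT_{m+1}} (s ⊣ t ∪ s ⊢ t) = PBT_{n+m+1}. -/

import Mathlib

/-- Planar binary rooted trees: either the trivial tree `leaf` (drawn `|`)
or the grafting `node l r = l ∨ r` of two trees. -/
inductive PBT : Type
  | leaf : PBT
  | node : PBT → PBT → PBT
deriving DecidableEq

namespace PBT

/-- Number of internal vertices of a tree. -/
def size : PBT → ℕ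
  | leaf => 0
  | node l r => l.size + r.size + 1

/-- The dendriform sum of two trees, a set of trees:
`s + t = (s ⊣ t) ∪ (s ⊢ t)` with `s ⊣ t = sˡ ∨ (sʳ + t)`, `s ⊢ t = (s + tˡ) ∨ tʳ`,
and the trivial tree acting as neutral element. -/
def addT : PBT → PBT → Set PBT
  | leaf, t => {t}
  | node l r, leaf => {node l r}
  | node l r, node l' r' =>
      (fun x => node l x) '' addT r (node l' r') ∪
      (fun x => node x r') '' addT (node l r) l'
termination_by s t => s.size + t.size
decreasing_by all_goals (simp [size] <;> omega)

/-- The left operation `s ⊣ t := sˡ ∨ (sʳ + t)` on trees (with `s ⊣ | = s`),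
valued in sets of trees. -/
def leftT : PBT → PBT → Set PBT
  | leaf, _ => ∅
  | node l r, leaf => {node l r}
  | node l r, node l' r' => (fun x => node l x) '' addT r (node l' r')

/-- The right operation `s ⊢ t := (s + tˡ) ∨ tʳ` on trees (with `| ⊢ t = t`),
valued in sets of trees. -/
def rightT : PBT → PBT → Set PBT
  | _, leaf => ∅
  | leaf, t => {t}
  | node l r, node l' r' => (fun x => node x r') '' addT (node l r) l'

/-- Elementwise extension of `⊣` to sets of trees. -/
def leftS (S T : Set PBT) : Set PBT := ⋃ s ∈ S, ⋃ t ∈ T, leftT s t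

/-- Elementwise extension of `⊢` to sets of trees. -/
def rightS (S T : Set PBT) : Set PBT := ⋃ s ∈ S, ⋃ t ∈ T, rightT s t

/-- Elementwise extension of the sum `+` to sets of trees:
`S + T = (S ⊣ T) ∪ (S ⊢ T)`. -/
def addS (S T : Set PBT) : Set PBT := ⋃ s ∈ S, ⋃ t ∈ T, addT s t

/-- A nonempty finite set of nontrivial trees. -/
def Good (S : Set PBT) : Prop := S.Nonempty ∧ S.Finite ∧ ∀ t ∈ S, t ≠ leaf

lemma size_of_mem_addT : ∀ s t u : PBT, u ∈ addT s t → u.size = s.size + t.size := by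
  intro s t
  induction s, t using addT.induct with
  | case1 t => intro u hu; rw [addT] at hu; simp_all [size]
  | case2 l r => intro u hu; rw [addT] at hu; simp_all [size]
  | case3 l r l' r' ih1 ih2 =>
    intro u hu
    rw [addT] at hu
    rcases hu with ⟨x, hx, rfl⟩ | ⟨x, hx, rfl⟩
    · have := ih1 x hx; simp [size] at this ⊢; omega
    · have := ih2 x hx; simp [size] at this ⊢; omega

lemma addT_leaf_right (s : PBT) : addT s leaf = {s} := by
  cases s <;> rw [addT]

lemma exists_mem_addT : ∀ (u : PBT) (n m : ℕ), u.size = n + m →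
    ∃ s t : PBT, s.size = n ∧ t.size = m ∧ u ∈ addT s t := by
  intro u
  induction u with
  | leaf =>
    intro n m h
    simp [size] at h
    exact ⟨leaf, leaf, by simp [size]; omega, by simp [size]; omega, by rw [addT]; rfl⟩
  | node l r ihl ihr =>
    intro n m h
    simp [size] at h
    rcases Nat.eq_zero_or_pos n with hn | hn
    · exact ⟨leaf, node l r, by simp [size, hn], by simp [size]; omega,
        by rw [addT]; rfl⟩
    rcases Nat.eq_zero_or_pos m with hm | hm
    · exact ⟨node l r, leaf, by simp [size]; omega, by simp [size, hm],
        by rw [addT_leaf_right]; rfl⟩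
    by_cases hcase : l.size + 1 ≤ n
    · -- split in the right subtree
      obtain ⟨b, t, hb, ht, hmem⟩ := ihr (n - l.size - 1) m (by omega)
      obtain _ | ⟨c, d⟩ := t
      · simp [size] at ht; omega
      refine ⟨node l b, node c d, by simp [size]; omega, ht, ?_⟩
      rw [addT]
      exact Or.inl ⟨r, hmem, rfl⟩
    · -- split in the left subtree
      obtain ⟨s, c, hs, hc, hmem⟩ := ihl n (m - r.size - 1) (by omega)
      obtain _ | ⟨a, b⟩ := s
      · simp [size] at hs; omega
      refine ⟨node a b, node c r, hs, by simp [size]; omega, ?_⟩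
      rw [addT]
      exact Or.inr ⟨l, hmem, rfl⟩

end PBT

open PBT in
/-- The sum of the set of all planar binary trees with `n` internal vertices and
the set of all trees with `m` internal vertices is the set of all trees with
`n + m` internal vertices:
`⋃_{s ∈ PBTₙ₊₁, t ∈ PBTₘ₊₁} (s ⊣ t ∪ s ⊢ t) = PBT_{n+m+1}`. -/
theorem addS_PBTn (n m : ℕ) :
    addS {t : PBT | t.size = n} {t : PBT | t.size = m} = {t : PBT | t.size = n + m} := by
  ext u
  simp only [addS, Set.mem_iUnion, Set.mem_setOf_eq]
  constructor
  · rintro ⟨s, hs, t, ht, hu⟩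
    rw [size_of_mem_addT s t u hu, hs, ht]
  · intro hu
    obtain ⟨s, t, hs, ht, hmem⟩ := exists_mem_addT u n m hu
    exact ⟨s, hs, t, ht, hmem⟩
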